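/- arXiv:2204.05865 — 3 statements merged into one kernel-verified Lean document; each statement's English description precedes it below -/
import Mathlib

section
/- Let G be a 2-edge-connected graph and T a subset of vertices of G with |T| even. Then G has a T-join of size at most |E(G)|/2, i.e., there exists a subset J of E(G) with |J| ≤ |E(G)|/2 such that a vertex v has odd degree in the subgraph induced by J if and only if v ∈ T. -/
open SimpleGraph

variable {V : Type*}

/-- `σ e = true` means the edge `e` is negative. Number of negative edges in `E`. -/
noncomputable def negCount (σ : Sym2 V → Bool) (E : Set (Sym2 V)) : ℕ :=
  (E ∩ {e | σ e = true}).ncard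

/-- Number of negative edges in a list of edges (with multiplicity). -/
def listNegCount (σ : Sym2 V → Bool) (l : List (Sym2 V)) : ℕ :=
  (l.filter fun e => σ e).length

/-- A circuit: a connected `2`-regular subgraph. -/
def IsCircuit (G : SimpleGraph V) (C : G.Subgraph) : Prop :=
  C.Connected ∧ ∀ v ∈ C.verts, (C.neighborSet v).ncard = 2

/-- A balanced circuit: even number of negative edges. -/
def IsBalancedCircuit (G : SimpleGraph V) (σ : Sym2 V → Bool) (C : G.Subgraph) : Prop :=
  IsCircuit G C ∧ Even (negCount σ C.edgeSet)

/-- An unbalanced circuit: odd number of negative edges. -/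
def IsUnbalancedCircuit (G : SimpleGraph V) (σ : Sym2 V → Bool) (C : G.Subgraph) : Prop :=
  IsCircuit G C ∧ Odd (negCount σ C.edgeSet)

/-- `P` is the subgraph of a (possibly trivial) path from `u` to `v`. -/
def IsPathSubgraph (G : SimpleGraph V) (P : G.Subgraph) (u v : V) : Prop :=
  ∃ w : G.Walk u v, w.IsPath ∧ P.verts = {x | x ∈ w.support} ∧
    P.edgeSet = {e | e ∈ w.edges}

/-- A barbell: two unbalanced circuits joined by a (possibly trivial) path
meeting the circuits only at its ends. -/
def IsBarbell (G : SimpleGraph V) (σ : Sym2 V → Bool) (H : G.Subgraph) : Prop :=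
  ∃ (C₁ C₂ P : G.Subgraph) (u v : V),
    IsUnbalancedCircuit G σ C₁ ∧ IsUnbalancedCircuit G σ C₂ ∧
    IsPathSubgraph G P u v ∧ u ∈ C₁.verts ∧ v ∈ C₂.verts ∧
    P.verts ∩ C₁.verts = {u} ∧ P.verts ∩ C₂.verts = {v} ∧
    C₁.verts ∩ C₂.verts ⊆ {u} ∩ {v} ∧
    C₁.edgeSet ∩ C₂.edgeSet = ∅ ∧
    H = C₁ ⊔ C₂ ⊔ P

/-- A sign-circuit: a balanced circuit or a barbell. -/
def IsSignCircuit (G : SimpleGraph V) (σ : Sym2 V → Bool) (H : G.Subgraph) : Prop :=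
  IsBalancedCircuit G σ H ∨ IsBarbell G σ H

/-- Flow-admissible: every edge lies in a sign-circuit (equivalently, the signed
graph admits a nowhere-zero integer flow). -/
def FlowAdmissible (G : SimpleGraph V) (σ : Sym2 V → Bool) : Prop :=
  ∀ e ∈ G.edgeSet, ∃ H : G.Subgraph, IsSignCircuit G σ H ∧ e ∈ H.edgeSet

/-- Total length of a family of subgraphs. -/
noncomputable def coverLength (G : SimpleGraph V) (𝓕 : Multiset G.Subgraph) : ℕ :=
  (𝓕.map fun H => H.edgeSet.ncard).sum

/-- The family `𝓕` covers the edge set `E`. -/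
def Covers (G : SimpleGraph V) (𝓕 : Multiset G.Subgraph) (E : Set (Sym2 V)) : Prop :=
  ∀ e ∈ E, ∃ H ∈ 𝓕, e ∈ H.edgeSet

/-- Cubic graph: every vertex has degree `3`. -/
def IsCubic (G : SimpleGraph V) : Prop := ∀ v : V, (G.neighborSet v).ncard = 3

/-- `2`-edge-connected: connected and bridgeless. -/
def TwoEdgeConnected (G : SimpleGraph V) : Prop :=
  G.Connected ∧ ∀ e, ¬ G.IsBridge e

/-- Balanced signed graph: every circuit has an even number of negative edges. -/
def IsBalancedGraph (G : SimpleGraph V) (σ : Sym2 V → Bool) : Prop :=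
  ∀ C : G.Subgraph, IsCircuit G C → Even (negCount σ C.edgeSet)

/-- A `2`-factor: a spanning `2`-regular subgraph. -/
def IsTwoFactor (G : SimpleGraph V) (F : G.Subgraph) : Prop :=
  F.IsSpanning ∧ ∀ v : V, (F.neighborSet v).ncard = 2

/-- A proper 3-edge-coloring: edges sharing a vertex get different colors. -/
def Proper3EdgeColoring (G : SimpleGraph V) (c : Sym2 V → Fin 3) : Prop :=
  ∀ e ∈ G.edgeSet, ∀ f ∈ G.edgeSet, e ≠ f → (∃ x, x ∈ e ∧ x ∈ f) → c e ≠ c f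

/-- 3-edge-colorable graph. -/
def ThreeEdgeColorable (G : SimpleGraph V) : Prop :=
  ∃ c : Sym2 V → Fin 3, Proper3EdgeColoring G c

/-- `S` is a segment of the circuit `C` determined by a set `Mv` of vertices
(the vertex set of a component `M`): a maximal subpath of `C` whose endpoints
are attachments of `M` and whose internal vertices are not in `M`. -/
def IsSegment (G : SimpleGraph V) (C : G.Subgraph) (Mv : Set V) (S : G.Subgraph) : Prop :=
  ∃ (a b : V) (w : G.Walk a b),
    w.edges ≠ [] ∧ w.support.tail.Nodup ∧
    (∀ e ∈ w.edges, e ∈ C.edgeSet) ∧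
    a ∈ Mv ∧ b ∈ Mv ∧
    (∀ x ∈ w.support, x ∈ Mv → x = a ∨ x = b) ∧
    S.verts = {x | x ∈ w.support} ∧ S.edgeSet = {e | e ∈ w.edges}

/-!
Over `ZMod 2`, the `T`-joins of `G` are the supports of the edge vectors in one coset `x + K` of
the cycle space `K = ker ∂`; the coset exists because `G` is connected and `|T|` is even. Since
`G` has no bridge, every edge lies on a cycle, so no coordinate vanishes on all of `K`; then each
edge lies in exactly half of the supports of `x + K`, and averaging the support sizes over the
coset yields a `T`-join with at most `|E(G)|/2` edges.
-/

open Finset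

namespace AddSubgroup

variable {ι : Type*} [Fintype ι] [DecidableEq ι]

lemma two_mul_card_filter_apply_ne (K : AddSubgroup (ι → ZMod 2)) [DecidablePred (· ∈ K)]
    {i : ι} (hi : ∃ z ∈ K, z i ≠ 0) (c : ZMod 2) :
    2 * #{z | z ∈ K ∧ z i ≠ c} = #{z | z ∈ K} := by
  obtain ⟨z₀, hz₀K, hz₀i⟩ := hi
  have hz₀i : z₀ i = 1 := by revert hz₀i; generalize z₀ i = a; decide +revert
  have hflip : ∀ a : ZMod 2, a + 1 ≠ c ↔ a = c := by decide +revert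
  have hinv (z : ι → ZMod 2) : z + z₀ + z₀ = z := by
    rw [add_assoc, ZModModule.add_self, add_zero]
  have hswap : #{z | z ∈ K ∧ z i = c} = #{z | z ∈ K ∧ z i ≠ c} := by
    refine card_nbij' (· + z₀) (· + z₀) ?_ ?_ (fun z _ => hinv z) (fun z _ => hinv z) <;>
      intro z hz <;> simp only [coe_filter, mem_univ, true_and, Set.mem_ofPred_eq] at hz ⊢ <;>
      refine ⟨K.add_mem hz.1 hz₀K, ?_⟩ <;> rw [Pi.add_apply, hz₀i]
    · exact (hflip _).2 hz.2
    · exact not_not.1 fun h => hz.2 ((hflip _).1 h)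
  calc 2 * #{z | z ∈ K ∧ z i ≠ c}
      = #{z | z ∈ K ∧ z i = c} + #{z | z ∈ K ∧ z i ≠ c} := by rw [two_mul, hswap]
    _ = #{z | z ∈ K} := by
      rw [← filter_filter, ← filter_filter]
      exact card_filter_add_card_filter_not _

theorem exists_two_mul_hammingNorm_add_le (K : AddSubgroup (ι → ZMod 2))
    (hK : ∀ i, ∃ z ∈ K, z i ≠ 0) (x : ι → ZMod 2) :
    ∃ z ∈ K, 2 * hammingNorm (x + z) ≤ Fintype.card ι := by
  classical
  have hnorm (z : ι → ZMod 2) : hammingNorm (x + z) = #{i | z i ≠ x i} := by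
    simp only [hammingNorm, Pi.add_apply, ne_eq, ← CharTwo.sub_eq_add, sub_eq_zero, eq_comm]
  have hsum :
      ∑ z ∈ {z | z ∈ K}, 2 * hammingNorm (x + z) = #{z | z ∈ K} * Fintype.card ι := by
    calc ∑ z ∈ {z | z ∈ K}, 2 * hammingNorm (x + z)
        = 2 * ∑ i, #{z | z ∈ K ∧ z i ≠ x i} := by
          simp only [← mul_sum, hnorm, ← filter_filter]
          exact congrArg _ (sum_card_bipartiteAbove_eq_sum_card_bipartiteBelow _)
      _ = #{z | z ∈ K} * Fintype.card ι := by
          simp [mul_sum, two_mul_card_filter_apply_ne K (hK _), mul_comm]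
  obtain ⟨z, hz, hle⟩ := exists_le_of_sum_le (s := {z | z ∈ K}) ⟨0, by simp [K.zero_mem]⟩
    (g := fun _ => Fintype.card ι) (by rw [hsum, sum_const, smul_eq_mul])
  exact ⟨z, (mem_filter.1 hz).2, hle⟩

end AddSubgroup

namespace SimpleGraph

variable [Fintype V] {G : SimpleGraph V} [DecidableRel G.Adj]

def edgeSupport (y : G.edgeSet → ZMod 2) : Finset (Sym2 V) :=
  (univ.filter (y · ≠ 0)).map (Function.Embedding.subtype _)

lemma coe_edgeSupport_subset (y : G.edgeSet → ZMod 2) : ↑(edgeSupport y) ⊆ G.edgeSet := by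
  intro e he
  obtain ⟨e', -, rfl⟩ := mem_map.1 he
  exact e'.2

lemma card_edgeSupport (y : G.edgeSet → ZMod 2) : #(edgeSupport y) = hammingNorm y :=
  card_map _

variable [DecidableEq V] (G)

def boundary : (G.edgeSet → ZMod 2) →ₗ[ZMod 2] (V → ZMod 2) where
  toFun x v := ∑ e ∈ univ.filter (fun e : G.edgeSet => v ∈ (e : Sym2 V)), x e
  map_add' x y := by ext; simp [sum_add_distrib]
  map_smul' c x := by ext; simp [mul_sum]

variable {G}

lemma boundary_apply (x : G.edgeSet → ZMod 2) (v : V) :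
    G.boundary x v = ∑ e ∈ univ.filter (fun e : G.edgeSet => v ∈ (e : Sym2 V)), x e := rfl

lemma boundary_single {a b : V} (h : G.Adj a b) :
    G.boundary (Pi.single ⟨s(a, b), h⟩ 1) = Pi.single a 1 + Pi.single b 1 := by
  ext v
  rw [boundary_apply, sum_pi_single']
  by_cases hva : v = a
  · subst hva; simp [h.ne]
  · by_cases hvb : v = b
    · subst hvb; simp [hva]
    · simp [hva, hvb]

lemma exists_boundary_eq_of_walk {u v : V} (w : G.Walk u v) :
    ∃ x, G.boundary x = Pi.single u 1 + Pi.single v 1 ∧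
      ∀ e, x e ≠ 0 → (e : Sym2 V) ∈ w.edges := by
  induction w with
  | nil => exact ⟨0, by simp [ZModModule.add_self], by simp⟩
  | @cons a b c h p ih =>
    obtain ⟨x, hx, hxp⟩ := ih
    refine ⟨Pi.single ⟨s(a, b), h⟩ 1 + x, ?_, fun e he => ?_⟩
    · rw [map_add, boundary_single, hx, ZModModule.add_add_add_cancel]
    · rw [Walk.edges_cons, List.mem_cons]
      by_cases hab : e = ⟨s(a, b), h⟩
      · exact .inl (congrArg Subtype.val hab)
      · exact .inr (hxp e (by simpa [hab] using he))

lemma Connected.exists_boundary_eq (hG : G.Connected) (f : V → ZMod 2) (hf : ∑ v, f v = 0) :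
    ∃ x, G.boundary x = f := by
  obtain ⟨v₀⟩ := hG.nonempty
  choose x hx using fun t => exists_boundary_eq_of_walk (hG.preconnected v₀ t).some
  refine ⟨∑ t, f t • x t, ?_⟩
  simp only [map_sum, map_smul, hx, smul_add]
  rw [sum_add_distrib, ← sum_smul, hf, zero_smul, zero_add]
  simp only [← Pi.single_smul, smul_eq_mul, mul_one]
  exact univ_sum_single f

lemma exists_mem_ker_boundary_apply_ne_zero {e : Sym2 V} (he : e ∈ G.edgeSet)
    (hbr : ¬ G.IsBridge e) : ∃ z ∈ G.boundary.ker, z ⟨e, he⟩ ≠ 0 := by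
  induction e with | h u v =>
  obtain ⟨p⟩ := not_not.1 (isBridge_iff.not.1 hbr)
  obtain ⟨x, hx, hxp⟩ := exists_boundary_eq_of_walk (p.mapLe (deleteEdges_le _))
  refine ⟨x + Pi.single ⟨s(u, v), he⟩ 1, ?_, ?_⟩
  · rw [LinearMap.mem_ker, map_add, hx, boundary_single (show G.Adj u v from he),
      ZModModule.add_self]
  · have hx₀ : x ⟨s(u, v), he⟩ = 0 := by
      by_contra hne
      have hdel := p.edges_subset_edgeSet (by simpa using hxp _ hne)
      simp at hdel
    simp [hx₀]

lemma odd_card_filter_mem_edgeSupport_iff (y : G.edgeSet → ZMod 2) (v : V) :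
    Odd #{e ∈ edgeSupport y | v ∈ e} ↔ G.boundary y v = 1 := by
  have hy (e : G.edgeSet) : y e = if y e ≠ 0 then 1 else 0 := by
    generalize y e = a; decide +revert
  rw [← ZMod.natCast_eq_one_iff_odd, edgeSupport, filter_map, card_map, boundary_apply,
    sum_congr rfl fun e _ => hy e, sum_boole, filter_filter, filter_filter]
  simp only [Function.comp_apply, Function.Embedding.coe_subtype, and_comm]
  congr!

end SimpleGraph

/-- Wu–Ye T-join lemma. A 2-edge-connected graph `G` with
`T ⊆ V(G)` of even cardinality has a `T`-join of size at most `|E(G)|/2`. -/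
theorem stmt0 {V : Type*} [Fintype V] [DecidableEq V] (G : SimpleGraph V)
    [DecidableRel G.Adj]
    (h2ec : TwoEdgeConnected G) (T : Finset V) (hT : Even T.card) :
    ∃ J : Finset (Sym2 V), ↑J ⊆ G.edgeSet ∧ 2 * J.card ≤ G.edgeFinset.card ∧
      ∀ v : V, v ∈ T ↔ Odd (J.filter (fun e => v ∈ e)).card := by
  obtain ⟨x, hx⟩ := h2ec.1.exists_boundary_eq (fun v => if v ∈ T then 1 else 0)
    (by simpa [sum_boole] using hT.natCast_zmod_two)
  obtain ⟨z, hz, hle⟩ := G.boundary.ker.toAddSubgroup.exists_two_mul_hammingNorm_add_le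
    (fun e => exists_mem_ker_boundary_apply_ne_zero e.2 (h2ec.2 e)) x
  refine ⟨edgeSupport (x + z), coe_edgeSupport_subset _, ?_, fun v => ?_⟩
  · rwa [card_edgeSupport, edgeFinset_card]
  · rw [odd_card_filter_mem_edgeSupport_iff, map_add, LinearMap.mem_ker.1 hz, add_zero, hx]
    by_cases hv : v ∈ T <;> simp [hv]
end

section
/- Let H be a connected signed graph consisting of a circuit C together with two internally disjoint paths P₁ (from u₁ to u₂) and P₂ (from u₃ to an internal vertex v of P₁), where u₁, u₂, u₃ are distinct vertices on C, all edges of P₁ and P₂ are positive, and each of the three arcs u₂Cu₁, u₁Cu₃, u₃Cu₂ contains an even number of negative edges. Write P₁ = u₁P₁₁v ∪ vP₁₂u₂. Then the three circuits B₁ = P₁₁ ∪ P₁₂ ∪ u₂Cu₁, B₂ = P₂ ∪ P₁₁ ∪ u₁Cu₃, B₃ = P₁₂ ∪ P₂ ∪ u₃Cu₂ are all balanced, and each of the three pairs {B₁,B₂}, {B₂,B₃}, {B₃,B₁} covers every edge of H, with each edge of H covered exactly 4 times in total by the three pairs; consequently some pair has length at most (4/3)|E(H)|. -/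
open SimpleGraph

variable {V : Type*}

/-! Each of the six pieces of `H` (the arcs `d₁ d₂ d₃` of `C` and the positive paths
`p₁₁ p₁₂ p₂`) lies in exactly two of `B₁ B₂ B₃`, so the three walks together list every edge of
`H` exactly twice; since the pieces are edge-disjoint paths, `E(H)` has as many elements as they
have edges. Every pair of walks therefore covers `H`, the three pairs have total length
`4|E(H)|`, and the shortest pair has length at most `4|E(H)|/3`. Each `Bᵢ` is balanced because
its only negative edges are those of two consecutive arcs of `C`. -/

@[simp]
lemma listNegCount_append (σ : Sym2 V → Bool) (l₁ l₂ : List (Sym2 V)) :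
    listNegCount σ (l₁ ++ l₂) = listNegCount σ l₁ + listNegCount σ l₂ := by
  simp [listNegCount]

@[simp]
lemma listNegCount_reverse (σ : Sym2 V → Bool) (l : List (Sym2 V)) :
    listNegCount σ l.reverse = listNegCount σ l := by
  simp [listNegCount]

lemma listNegCount_eq_zero {σ : Sym2 V → Bool} {l : List (Sym2 V)}
    (h : ∀ e ∈ l, σ e = false) : listNegCount σ l = 0 := by
  simpa [listNegCount] using h

lemma List.Nodup.ncard_setOf_mem {α : Type*} {l : List α} (hl : l.Nodup) :
    {x | x ∈ l}.ncard = l.length := by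
  classical
  rw [← List.coe_toFinset, Set.ncard_coe_finset, List.toFinset_card_of_nodup hl]

section ThetaChord

variable {α : Type*} (a₁ a₂ a₃ b₁ b₂ c : List α)

lemma thetaChord_edges_perm [BEq α] [LawfulBEq α] :
    ((b₁ ++ (b₂ ++ (a₂ ++ a₃))) ++ (c ++ (b₁.reverse ++ (a₁ ++ a₂))) ++
        (c.reverse ++ (a₃ ++ a₁ ++ b₂.reverse))).Perm
      ((a₁ ++ a₂ ++ a₃ ++ b₁ ++ b₂ ++ c) ++ (a₁ ++ a₂ ++ a₃ ++ b₁ ++ b₂ ++ c)) := by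
  rw [List.perm_iff_count]
  intro e
  simp only [List.count_append, List.count_reverse]
  omega

variable {a₁ a₂ a₃ b₁ b₂ c} {e : α}

lemma thetaChord_mem_pairs (he : e ∈ a₁ ++ a₂ ++ a₃ ++ b₁ ++ b₂ ++ c) :
    (e ∈ b₁ ++ (b₂ ++ (a₂ ++ a₃)) ∨ e ∈ c ++ (b₁.reverse ++ (a₁ ++ a₂))) ∧
    (e ∈ c ++ (b₁.reverse ++ (a₁ ++ a₂)) ∨ e ∈ c.reverse ++ (a₃ ++ a₁ ++ b₂.reverse)) ∧
    (e ∈ c.reverse ++ (a₃ ++ a₁ ++ b₂.reverse) ∨ e ∈ b₁ ++ (b₂ ++ (a₂ ++ a₃))) := by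
  simp only [List.mem_append, List.mem_reverse] at he ⊢
  tauto

end ThetaChord

section DoubleCover

variable {α : Type*} {l₁ l₂ l₃ L : List α}

lemma count_add_count_add_count_of_perm [BEq α] [LawfulBEq α]
    (hperm : (l₁ ++ l₂ ++ l₃).Perm (L ++ L)) (hL : L.Nodup) {e : α} (he : e ∈ L) :
    l₁.count e + l₂.count e + l₃.count e = 2 := by
  simpa only [List.count_append, List.count_eq_one_of_mem hL he] using hperm.count_eq e

lemma three_mul_min_pair_length_le_of_perm (hperm : (l₁ ++ l₂ ++ l₃).Perm (L ++ L)) :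
    3 * min (l₁.length + l₂.length) (min (l₂.length + l₃.length) (l₃.length + l₁.length)) ≤
      4 * L.length := by
  have := hperm.length_eq
  simp only [List.length_append] at this
  omega

end DoubleCover

theorem stmt15_general {V : Type*} [DecidableEq V]
    (G : SimpleGraph V) (σ : Sym2 V → Bool)
    {u₁ u₂ u₃ v : V}
    (d₁ : G.Walk u₁ u₂) (d₂ : G.Walk u₂ u₃) (d₃ : G.Walk u₃ u₁)
    (p₁₁ : G.Walk u₁ v) (p₁₂ : G.Walk v u₂) (p₂ : G.Walk u₃ v)
    (hC : (d₁.append (d₂.append d₃)).IsCycle)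
    (hP1 : (p₁₁.append p₁₂).IsPath) (hp2 : p₂.IsPath)
    (hdisj : [d₁.edges, d₂.edges, d₃.edges, p₁₁.edges, p₁₂.edges,
      p₂.edges].Pairwise List.Disjoint)
    (hpos : ∀ e ∈ p₁₁.edges ++ p₁₂.edges ++ p₂.edges, σ e = false)
    (hev1 : Even (listNegCount σ (d₂.append d₃).edges))
    (hev2 : Even (listNegCount σ (d₁.append d₂).edges))
    (hev3 : Even (listNegCount σ (d₃.append d₁).edges)) :
    ∀ (B₁ : G.Walk u₁ u₁) (B₂ : G.Walk u₃ u₃) (B₃ : G.Walk v v)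
      (EH : Set (Sym2 V)),
      B₁ = p₁₁.append (p₁₂.append (d₂.append d₃)) →
      B₂ = p₂.append (p₁₁.reverse.append (d₁.append d₂)) →
      B₃ = p₂.reverse.append ((d₃.append d₁).append p₁₂.reverse) →
      EH = {e | e ∈ d₁.edges ++ d₂.edges ++ d₃.edges ++ p₁₁.edges ++
        p₁₂.edges ++ p₂.edges} →
      Even (listNegCount σ B₁.edges) ∧
      Even (listNegCount σ B₂.edges) ∧
      Even (listNegCount σ B₃.edges) ∧
      (∀ e ∈ EH, e ∈ B₁.edges ∨ e ∈ B₂.edges) ∧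
      (∀ e ∈ EH, e ∈ B₂.edges ∨ e ∈ B₃.edges) ∧
      (∀ e ∈ EH, e ∈ B₃.edges ∨ e ∈ B₁.edges) ∧
      (∀ e ∈ EH, 2 * (B₁.edges.count e + B₂.edges.count e + B₃.edges.count e) = 4) ∧
      3 * min (B₁.edges.length + B₂.edges.length)
          (min (B₂.edges.length + B₃.edges.length)
            (B₃.edges.length + B₁.edges.length)) ≤ 4 * EH.ncard := by
  intro B₁ B₂ B₃ EH rfl rfl rfl rfl
  have hCnodup := hC.edges_nodup
  have hP1nodup := hP1.edges_nodup
  simp only [Walk.edges_append, List.nodup_append] at hCnodup hP1nodup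
  obtain ⟨hd₁, ⟨hd₂, hd₃, -⟩, -⟩ := hCnodup
  obtain ⟨hp₁₁, hp₁₂, -⟩ := hP1nodup
  have hHnodup : (d₁.edges ++ d₂.edges ++ d₃.edges ++ p₁₁.edges ++ p₁₂.edges ++
      p₂.edges).Nodup := by
    simpa using List.nodup_flatten.mpr
      ⟨by simp [hd₁, hd₂, hd₃, hp₁₁, hp₁₂, hp2.edges_nodup], hdisj⟩
  have hperm := thetaChord_edges_perm d₁.edges d₂.edges d₃.edges p₁₁.edges p₁₂.edges p₂.edges
  simp only [List.forall_mem_append] at hpos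
  simp only [Walk.edges_append, Walk.edges_reverse, listNegCount_append, listNegCount_reverse,
    listNegCount_eq_zero hpos.1.1, listNegCount_eq_zero hpos.1.2, listNegCount_eq_zero hpos.2,
    zero_add, Set.mem_ofPred_eq, hHnodup.ncard_setOf_mem] at hev1 hev2 hev3 ⊢
  refine ⟨hev1, hev2, by simpa using hev3,
    fun _ he => (thetaChord_mem_pairs he).1, fun _ he => (thetaChord_mem_pairs he).2.1,
    fun _ he => (thetaChord_mem_pairs he).2.2, fun _ he => ?_,
    three_mul_min_pair_length_le_of_perm hperm⟩
  rw [count_add_count_add_count_of_perm hperm hHnodup he]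

/-- theta-plus-chord configuration of Case 1 of Lemma 2.7.
The circuit `C` is decomposed into clockwise arcs `d₁ : u₁Cu₂`, `d₂ : u₂Cu₃`,
`d₃ : u₃Cu₁`; `p₁₁ : u₁P₁₁v`, `p₁₂ : vP₁₂u₂`, `p₂ : u₃P₂v` are internally disjoint
positive paths. Then `B₁ = P₁₁∪P₁₂∪u₂Cu₁`, `B₂ = P₂∪P₁₁∪u₁Cu₃`, `B₃ = P₁₂∪P₂∪u₃Cu₂`
are balanced closed walks, each pair of them covers every edge of
`H = C ∪ P₁₁ ∪ P₁₂ ∪ P₂`, every edge of `H` is covered exactly 4 times in total by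
the three pairs, and some pair has length at most `(4/3)|E(H)|`. -/
theorem stmt15 {V : Type*} [Fintype V] [DecidableEq V]
    (G : SimpleGraph V) (σ : Sym2 V → Bool)
    {u₁ u₂ u₃ v : V} (hu12 : u₁ ≠ u₂) (hu13 : u₁ ≠ u₃) (hu23 : u₂ ≠ u₃)
    (hv1 : v ≠ u₁) (hv2 : v ≠ u₂) (hv3 : v ≠ u₃)
    (d₁ : G.Walk u₁ u₂) (d₂ : G.Walk u₂ u₃) (d₃ : G.Walk u₃ u₁)
    (p₁₁ : G.Walk u₁ v) (p₁₂ : G.Walk v u₂) (p₂ : G.Walk u₃ v)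
    (hC : (d₁.append (d₂.append d₃)).IsCycle)
    (hP1 : (p₁₁.append p₁₂).IsPath) (hp2 : p₂.IsPath)
    (hdisj : [d₁.edges, d₂.edges, d₃.edges, p₁₁.edges, p₁₂.edges,
      p₂.edges].Pairwise List.Disjoint)
    (hpos : ∀ e ∈ p₁₁.edges ++ p₁₂.edges ++ p₂.edges, σ e = false)
    (hev1 : Even (listNegCount σ (d₂.append d₃).edges))
    (hev2 : Even (listNegCount σ (d₁.append d₂).edges))
    (hev3 : Even (listNegCount σ (d₃.append d₁).edges)) :
    ∀ (B₁ : G.Walk u₁ u₁) (B₂ : G.Walk u₃ u₃) (B₃ : G.Walk v v)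
      (EH : Set (Sym2 V)),
      B₁ = p₁₁.append (p₁₂.append (d₂.append d₃)) →
      B₂ = p₂.append (p₁₁.reverse.append (d₁.append d₂)) →
      B₃ = p₂.reverse.append ((d₃.append d₁).append p₁₂.reverse) →
      EH = {e | e ∈ d₁.edges ++ d₂.edges ++ d₃.edges ++ p₁₁.edges ++
        p₁₂.edges ++ p₂.edges} →
      Even (listNegCount σ B₁.edges) ∧
      Even (listNegCount σ B₂.edges) ∧
      Even (listNegCount σ B₃.edges) ∧
      (∀ e ∈ EH, e ∈ B₁.edges ∨ e ∈ B₂.edges) ∧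
      (∀ e ∈ EH, e ∈ B₂.edges ∨ e ∈ B₃.edges) ∧
      (∀ e ∈ EH, e ∈ B₃.edges ∨ e ∈ B₁.edges) ∧
      (∀ e ∈ EH, 2 * (B₁.edges.count e + B₂.edges.count e + B₃.edges.count e) = 4) ∧
      3 * min (B₁.edges.length + B₂.edges.length)
          (min (B₂.edges.length + B₃.edges.length)
            (B₃.edges.length + B₁.edges.length)) ≤ 4 * EH.ncard :=
  stmt15_general G σ d₁ d₂ d₃ p₁₁ p₁₂ p₂ hC hP1 hp2 hdisj hpos hev1 hev2 hev3
end

section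
/- Let G be a connected cubic graph and let C₁ and C' be two vertex-disjoint unbalanced circuits of a signed graph (G,σ). Then G contains a barbell Q consisting of C₁, C', and a path P joining them internally disjoint from both, with |E(Q)| ≤ (2/3)|E(G)| + 1. -/
open SimpleGraph

variable {V : Type*}

lemma circuit_edge_ncard {V : Type*} [Fintype V] {G : SimpleGraph V} {C : G.Subgraph}
    (h : ∀ v ∈ C.verts, (C.neighborSet v).ncard = 2) :
    C.edgeSet.ncard = C.verts.ncard := by
  classical
  have hdeg : ∀ (v : C.verts) (inst : Fintype (C.coe.neighborSet v)),
      @SimpleGraph.degree _ C.coe v inst = 2 := by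
    intro v inst
    rw [← @SimpleGraph.card_neighborSet_eq_degree _ _ _ inst, ← Nat.card_eq_fintype_card,
      Nat.card_congr (C.coeNeighborSetEquiv v), Nat.card_coe_set_eq]
    exact h v v.2
  have hsum := C.coe.sum_degrees_eq_twice_card_edges
  simp only [hdeg, Finset.sum_const, Finset.card_univ, smul_eq_mul] at hsum
  have h1 : C.coe.edgeSet.ncard = Fintype.card C.verts := by
    rw [Set.ncard_eq_toFinset_card']
    have : C.coe.edgeSet.toFinset = C.coe.edgeFinset := by
      simp [SimpleGraph.edgeFinset]
    rw [this]; omega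
  have h2 : C.edgeSet = Sym2.map ((↑) : C.verts → V) '' C.coe.edgeSet :=
    (C.image_coe_edgeSet_coe).symm
  rw [h2, Set.ncard_image_of_injective _ (Sym2.map.injective Subtype.val_injective), h1,
    Set.ncard_eq_toFinset_card', Set.toFinset_card]

lemma cubic_count {V : Type*} [Fintype V] {G : SimpleGraph V}
    (hcubic : ∀ v : V, (G.neighborSet v).ncard = 3) :
    3 * Fintype.card V = 2 * G.edgeSet.ncard := by
  classical
  have hdeg : ∀ (v : V) (inst : Fintype (G.neighborSet v)),
      @SimpleGraph.degree _ G v inst = 3 := by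
    intro v inst
    rw [← @SimpleGraph.card_neighborSet_eq_degree _ _ _ inst, ← Nat.card_eq_fintype_card,
      Nat.card_coe_set_eq]
    exact hcubic v
  have hsum := G.sum_degrees_eq_twice_card_edges
  simp only [hdeg, Finset.sum_const, Finset.card_univ, smul_eq_mul] at hsum
  have : G.edgeSet.toFinset = G.edgeFinset := by simp [SimpleGraph.edgeFinset]
  rw [Set.ncard_eq_toFinset_card', this]; omega

/-- Two vertex-disjoint unbalanced circuits of a connected cubic
signed graph extend to a barbell `Q` (joined by a nontrivial path meeting the circuits
only at its ends) with `|E(Q)| ≤ (2/3)|E(G)| + 1`. -/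
theorem stmt19 {V : Type*} [Fintype V] (G : SimpleGraph V) (σ : Sym2 V → Bool)
    (hconn : G.Connected) (hcubic : IsCubic G)
    (C₁ C' : G.Subgraph)
    (h₁ : IsUnbalancedCircuit G σ C₁) (h₂ : IsUnbalancedCircuit G σ C')
    (hdisj : C₁.verts ∩ C'.verts = ∅) :
    ∃ (P : G.Subgraph) (u v : V), IsPathSubgraph G P u v ∧ u ≠ v ∧
      u ∈ C₁.verts ∧ v ∈ C'.verts ∧
      P.verts ∩ C₁.verts = {u} ∧ P.verts ∩ C'.verts = {v} ∧
      IsBarbell G σ (C₁ ⊔ C' ⊔ P) ∧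
      3 * (C₁ ⊔ C' ⊔ P).edgeSet.ncard ≤ 2 * G.edgeSet.ncard + 3 := by
  classical
  obtain ⟨u₀, hu₀⟩ := h₁.1.1.nonempty
  obtain ⟨v₀, hv₀⟩ := h₂.1.1.nonempty
  set S : Set ℕ := {n | ∃ u v, u ∈ C₁.verts ∧ v ∈ C'.verts ∧
    ∃ w : G.Walk u v, w.IsPath ∧ w.length = n} with hSdef
  have hS : S.Nonempty := by
    obtain ⟨p⟩ := hconn.preconnected u₀ v₀
    exact ⟨p.bypass.length, u₀, v₀, hu₀, hv₀, p.bypass, p.bypass_isPath, rfl⟩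
  obtain ⟨u, v, hu, hv, w, hw, hlen⟩ := Nat.sInf_mem hS
  have hA : ∀ x ∈ w.support, x ∈ C₁.verts → x = u := by
    intro x hx hxC
    by_contra hxu
    have hmem : (w.dropUntil x hx).length ∈ S :=
      ⟨x, v, hxC, hv, w.dropUntil x hx, hw.dropUntil hx, rfl⟩
    have hle := Nat.sInf_le hmem
    have hsplit : (w.takeUntil x hx).length + (w.dropUntil x hx).length = w.length := by
      rw [← SimpleGraph.Walk.length_append, SimpleGraph.Walk.take_spec]
    have hpos : 0 < (w.takeUntil x hx).length :=
      Nat.pos_of_ne_zero fun h0 => hxu (SimpleGraph.Walk.eq_of_length_eq_zero h0).symm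
    omega
  have hB : ∀ x ∈ w.support, x ∈ C'.verts → x = v := by
    intro x hx hxC
    by_contra hxv
    have hmem : (w.takeUntil x hx).length ∈ S :=
      ⟨u, x, hu, hxC, w.takeUntil x hx, hw.takeUntil hx, rfl⟩
    have hle := Nat.sInf_le hmem
    have hsplit : (w.takeUntil x hx).length + (w.dropUntil x hx).length = w.length := by
      rw [← SimpleGraph.Walk.length_append, SimpleGraph.Walk.take_spec]
    have hpos : 0 < (w.dropUntil x hx).length :=
      Nat.pos_of_ne_zero fun h0 => hxv (SimpleGraph.Walk.eq_of_length_eq_zero h0)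
    omega
  have hune : u ≠ v := by
    intro h
    have : u ∈ C₁.verts ∩ C'.verts := ⟨hu, h ▸ hv⟩
    rw [hdisj] at this
    exact this
  set P := w.toSubgraph with hPdef
  have hPV : P.verts = {x | x ∈ w.support} := w.verts_toSubgraph
  have hPE : P.edgeSet = {e | e ∈ w.edges} := w.edgeSet_toSubgraph
  have hpath : IsPathSubgraph G P u v := ⟨w, hw, hPV, hPE⟩
  have hint1 : P.verts ∩ C₁.verts = {u} := by
    ext x
    constructor
    · rintro ⟨hxP, hxC⟩
      exact hA x (by rw [hPV] at hxP; exact hxP) hxC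
    · rintro rfl
      exact ⟨hPV ▸ w.start_mem_support, hu⟩
  have hint2 : P.verts ∩ C'.verts = {v} := by
    ext x
    constructor
    · rintro ⟨hxP, hxC⟩
      exact hB x (by rw [hPV] at hxP; exact hxP) hxC
    · rintro rfl
      exact ⟨hPV ▸ w.end_mem_support, hv⟩
  have hedisj : C₁.edgeSet ∩ C'.edgeSet = ∅ := by
    ext e
    simp only [Set.mem_inter_iff, Set.mem_empty_iff_false, iff_false, not_and]
    induction e using Sym2.ind with
    | _ x y =>
      intro he1 he2
      have hx1 : x ∈ C₁.verts := C₁.edge_vert (SimpleGraph.Subgraph.mem_edgeSet.mp he1)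
      have hx2 : x ∈ C'.verts := C'.edge_vert (SimpleGraph.Subgraph.mem_edgeSet.mp he2)
      have : x ∈ C₁.verts ∩ C'.verts := ⟨hx1, hx2⟩
      rw [hdisj] at this
      exact this
  have hbarbell : IsBarbell G σ (C₁ ⊔ C' ⊔ P) :=
    ⟨C₁, C', P, u, v, h₁, h₂, hpath, hu, hv, hint1, hint2,
      by rw [hdisj]; exact Set.empty_subset _, hedisj, rfl⟩
  refine ⟨P, u, v, hpath, hune, hu, hv, hint1, hint2, hbarbell, ?_⟩
  -- counting
  have hlen1 : 1 ≤ w.length :=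
    Nat.pos_of_ne_zero fun h0 => hune (SimpleGraph.Walk.eq_of_length_eq_zero h0)
  have hPv : P.verts.ncard = w.length + 1 := by
    rw [hPV, ← List.coe_toFinset, Set.ncard_coe_finset,
      List.toFinset_card_of_nodup hw.support_nodup, SimpleGraph.Walk.length_support]
  have hPe : P.edgeSet.ncard = w.length := by
    rw [hPE, ← List.coe_toFinset, Set.ncard_coe_finset,
      List.toFinset_card_of_nodup hw.edges_nodup, SimpleGraph.Walk.length_edges]
  set I : Set V := P.verts \ {u, v} with hIdef
  have huvP : ({u, v} : Set V) ⊆ P.verts := by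
    rintro x (rfl | rfl)
    · exact hPV ▸ w.start_mem_support
    · exact hPV ▸ w.end_mem_support
  have hI : I.ncard = w.length - 1 := by
    rw [hIdef, Set.ncard_diff huvP (Set.toFinite _), Set.ncard_pair hune, hPv]
    omega
  have hIC1 : Disjoint I C₁.verts := by
    rw [Set.disjoint_left]
    rintro x ⟨hxP, hxuv⟩ hxC
    exact hxuv (Or.inl (hA x (by rw [hPV] at hxP; exact hxP) hxC))
  have hIC2 : Disjoint I C'.verts := by
    rw [Set.disjoint_left]
    rintro x ⟨hxP, hxuv⟩ hxC
    exact hxuv (Or.inr (hB x (by rw [hPV] at hxP; exact hxP) hxC))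
  have hC1C2 : Disjoint C₁.verts C'.verts := Set.disjoint_iff_inter_eq_empty.mpr hdisj
  have hunion : (C₁.verts ∪ C'.verts ∪ I).ncard
      = C₁.verts.ncard + C'.verts.ncard + I.ncard := by
    rw [Set.ncard_union_eq (by
        rw [Set.disjoint_union_left]
        exact ⟨hIC1.symm, hIC2.symm⟩) (Set.toFinite _) (Set.toFinite _),
      Set.ncard_union_eq hC1C2 (Set.toFinite _) (Set.toFinite _)]
  have hbound : C₁.verts.ncard + C'.verts.ncard + I.ncard ≤ Fintype.card V := by
    rw [← hunion]
    calc (C₁.verts ∪ C'.verts ∪ I).ncard ≤ (Set.univ : Set V).ncard :=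
          Set.ncard_le_ncard (Set.subset_univ _) (Set.toFinite _)
      _ = Fintype.card V := by rw [Set.ncard_univ, Nat.card_eq_fintype_card]
  have hE1 : C₁.edgeSet.ncard = C₁.verts.ncard := circuit_edge_ncard h₁.1.2
  have hE2 : C'.edgeSet.ncard = C'.verts.ncard := circuit_edge_ncard h₂.1.2
  have hQ : (C₁ ⊔ C' ⊔ P).edgeSet.ncard
      ≤ C₁.verts.ncard + C'.verts.ncard + w.length := by
    rw [SimpleGraph.Subgraph.edgeSet_sup, SimpleGraph.Subgraph.edgeSet_sup]
    calc (C₁.edgeSet ∪ C'.edgeSet ∪ P.edgeSet).ncard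
        ≤ (C₁.edgeSet ∪ C'.edgeSet).ncard + P.edgeSet.ncard := Set.ncard_union_le _ _
      _ ≤ C₁.edgeSet.ncard + C'.edgeSet.ncard + P.edgeSet.ncard := by
          have := Set.ncard_union_le C₁.edgeSet C'.edgeSet
          omega
      _ = C₁.verts.ncard + C'.verts.ncard + w.length := by rw [hE1, hE2, hPe]
  have hcc := cubic_count hcubic
  omega
end
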